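/- arXiv:cs/0612055 — 3 statements merged into one kernel-verified Lean document; each statement's English description precedes it below -/
import Mathlib

section
/- Let X_1,...,X_n be 4-wise independent 0/1-valued random variables with σ_2 ≤ μ where μ = E(ΣX_i) and σ_k = Σ_i (E(X_i))^k, and suppose 12σ_3 ≤ 3μσ_2. Then E((X-μ)^4) ≤ μ + 3μ^2, where X = ΣX_i. -/
/-!
Centre the indicators, `Y i = X i - p i` with `p i = E (X i)`, and let `S` be a partial sum of
the `Y i`. In the binomial expansion of `E ((S + Y l) ^ 4)` every mixed term
`E (S ^ k * Y l ^ (4 - k))` has `k ≤ 3`, so it only involves four of the variables at a time and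
4-wise independence factors it. By induction over the index set,
`E ((∑ Y i) ^ 4) = ∑ E (Y i ^ 4) + 3 ((∑ E (Y i ^ 2)) ^ 2 - ∑ E (Y i ^ 2) ^ 2)`,
which for indicators is `μ - 7σ₂ + 12σ₃ - 6σ₄ + 3(μ - σ₂)²`; the hypotheses `4σ₃ ≤ μσ₂` and
`σ₂ ≤ μ` bound this by `μ + 3μ²`.
With fewer than four variables independence says nothing, but then Chebyshev's sum inequality
`μσ₂ ≤ nσ₃ ≤ 3σ₃` together with `4σ₃ ≤ μσ₂` forces `σ₃ = 0`, so every `X i` vanishes a.s.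
-/

open MeasureTheory ProbabilityTheory Finset
open scoped ENNReal

section KWise

variable {Ω ι β : Type*} [MeasurableSpace Ω] [MeasurableSpace β] {μ : Measure Ω}
  {f : ι → Ω → β} {k : ℕ}

def KWiseIndepFun (k : ℕ) (f : ι → Ω → β) (μ : Measure Ω) : Prop :=
  ∀ s : Finset ι, #s ≤ k → iIndepFun (fun i : s => f i) μ

lemma KWiseIndepFun.comp {γ : Type*} [MeasurableSpace γ] (h : KWiseIndepFun k f μ)
    (g : ι → β → γ) (hg : ∀ i, Measurable (g i)) : KWiseIndepFun k (fun i => g i ∘ f i) μ :=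
  fun s hs => (h s hs).comp (fun i => g i) fun i => hg i

lemma KWiseIndepFun.indepFun_finset [DecidableEq ι] (h : KWiseIndepFun k f μ)
    (hf : ∀ i, Measurable (f i)) {t : Finset ι} (ht : #t < k) {l : ι} (hl : l ∉ t) :
    IndepFun (fun ω (i : t) => f i ω) (f l) μ := by
  set s := insert l t
  have hindep : iIndepFun (fun i : s => f i) μ := h s ((card_insert_le l t).trans ht)
  let S : Finset s := univ.filter fun i => (i : ι) ∈ t
  let l' : s := ⟨l, mem_insert_self l t⟩
  have hST : Disjoint S {l'} := by simp [S, l', hl]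
  refine (hindep.indepFun_finset S {l'} hST fun i => hf i).comp
    (φ := fun (v : S → β) (i : t) => v ⟨⟨i, mem_insert_of_mem i.2⟩, by simp [S]⟩)
    (ψ := fun v => v ⟨l', mem_singleton_self l'⟩) ?_ ?_
  · exact measurable_pi_lambda _ fun i => measurable_pi_apply _
  · exact measurable_pi_apply _

lemma kWiseIndepFun_four_of_forall_ne [Fintype ι] (hcard : 4 ≤ Fintype.card ι)
    (h : ∀ i j k l : ι, i ≠ j → i ≠ k → i ≠ l → j ≠ k → j ≠ l → k ≠ l →
      iIndepFun ![f i, f j, f k, f l] μ) :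
    KWiseIndepFun 4 f μ := by
  intro s hs
  obtain ⟨t, hst, -, ht⟩ :=
    exists_subsuperset_card_eq (subset_univ s) hs (by simpa using hcard)
  set e : Fin 4 ≃ t := (t.equivFin.trans (finCongr ht)).symm
  have hne : ∀ a b : Fin 4, a ≠ b → (e a : ι) ≠ e b := fun a b hab hab' =>
    hab (e.injective (Subtype.ext hab'))
  have hfin : iIndepFun (fun m => f (e m)) μ := by
    convert h (e 0) (e 1) (e 2) (e 3) (hne 0 1 (by decide)) (hne 0 2 (by decide))
      (hne 0 3 (by decide)) (hne 1 2 (by decide)) (hne 1 3 (by decide)) (hne 2 3 (by decide))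
      using 1
    ext m : 1
    fin_cases m <;> rfl
  have htindep : iIndepFun (fun i : t => f i) μ :=
    (iIndepFun_precomp_of_bijective (f := fun i : t => f i) e.bijective).mp hfin
  exact htindep.precomp (g := fun i : s => (⟨i, hst i.2⟩ : t))
    fun a b hab => Subtype.ext (congrArg Subtype.val hab :)

end KWise

section FourthMoment

variable {Ω ι : Type*} [MeasurableSpace Ω] {μ : Measure Ω} {Y : ι → Ω → ℝ}

lemma MemLp.top_pow [IsFiniteMeasure μ] {f : Ω → ℝ} (hf : MemLp f ∞ μ) (n : ℕ) :
    MemLp (fun ω => f ω ^ n) ∞ μ := by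
  induction n with
  | zero => simpa using memLp_const (1 : ℝ)
  | succ n ih => simpa only [pow_succ] using hf.mul' ih

lemma MemLp.top_prod {κ : Type*} {s : Finset κ} {F : κ → Ω → ℝ}
    (hF : ∀ i ∈ s, MemLp (F i) ∞ μ) : MemLp (fun ω => ∏ i ∈ s, F i ω) ∞ μ := by
  simpa using MemLp.prod' hF

variable [IsProbabilityMeasure μ] [DecidableEq ι] (hind : KWiseIndepFun 4 Y μ)
  (hmeas : ∀ i, Measurable (Y i)) (hbdd : ∀ i, MemLp (Y i) ∞ μ)
include hind hmeas hbdd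

lemma integral_sum_pow_mul_pow {s : Finset ι} {l : ι} (hl : l ∉ s) {a : ℕ} (ha : a < 4)
    (b : ℕ) :
    ∫ ω, (∑ i ∈ s, Y i ω) ^ a * Y l ω ^ b ∂μ =
      (∫ ω, (∑ i ∈ s, Y i ω) ^ a ∂μ) * ∫ ω, Y l ω ^ b ∂μ := by
  have hprod : ∀ p : Fin a → ι, MemLp (fun ω => ∏ m, Y (p m) ω) ∞ μ := fun p =>
    MemLp.top_prod fun m _ => hbdd (p m)
  have hterm : ∀ p ∈ Fintype.piFinset fun _ : Fin a => s,
      ∫ ω, (∏ m, Y (p m) ω) * Y l ω ^ b ∂μ =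
        (∫ ω, ∏ m, Y (p m) ω ∂μ) * ∫ ω, Y l ω ^ b ∂μ := by
    intro p hp
    have ht : #(univ.image p) < 4 := card_image_le.trans_lt (by simpa using ha)
    have hlt : l ∉ univ.image p := by
      simp only [mem_image, mem_univ, true_and, not_exists]
      exact fun m hm => hl (hm ▸ Fintype.mem_piFinset.1 hp m)
    have hindep := (hind.indepFun_finset hmeas ht hlt).comp
      (φ := fun v => ∏ m, v ⟨p m, mem_image_of_mem p (mem_univ m)⟩) (ψ := fun x => x ^ b)
      (by fun_prop) (by fun_prop)
    exact hindep.integral_fun_mul_eq_mul_integral (hprod p).aestronglyMeasurable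
      (MemLp.top_pow (hbdd l) b).aestronglyMeasurable
  simp_rw [sum_pow', sum_mul]
  rw [integral_finsetSum _ fun p _ =>
    ((MemLp.top_pow (hbdd l) b).mul' (hprod p)).integrable le_top]
  rw [integral_finsetSum _ fun p _ => (hprod p).integrable le_top, sum_mul]
  exact sum_congr rfl hterm

lemma integral_sum_insert_pow {s : Finset ι} {l : ι} (hl : l ∉ s) {n : ℕ} (hn : n ≤ 4) :
    ∫ ω, (∑ i ∈ insert l s, Y i ω) ^ n ∂μ =
      ∑ k ∈ range n,
          n.choose k * ((∫ ω, (∑ i ∈ s, Y i ω) ^ k ∂μ) * ∫ ω, Y l ω ^ (n - k) ∂μ) +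
        ∫ ω, (∑ i ∈ s, Y i ω) ^ n ∂μ := by
  have hS : MemLp (fun ω => ∑ i ∈ s, Y i ω) ∞ μ := memLp_finsetSum s fun i _ => hbdd i
  have hint : ∀ a b c, Integrable (fun ω => (∑ i ∈ s, Y i ω) ^ a * Y l ω ^ b * c) μ :=
    fun a b c =>
      (((MemLp.top_pow (hbdd l) b).mul' (MemLp.top_pow hS a)).integrable le_top).mul_const c
  simp_rw [sum_insert hl, add_comm (Y l _), add_pow]
  rw [integral_finsetSum _ fun k _ => hint _ _ _, sum_range_succ]
  congr 1
  · refine sum_congr rfl fun k hk => ?_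
    rw [integral_mul_const, integral_sum_pow_mul_pow hind hmeas hbdd hl
      ((mem_range.1 hk).trans_le hn), mul_comm]
  · simp

variable (hmean : ∀ i, ∫ ω, Y i ω ∂μ = 0)
include hmean

lemma integral_sum_sq (s : Finset ι) :
    ∫ ω, (∑ i ∈ s, Y i ω) ^ 2 ∂μ = ∑ i ∈ s, ∫ ω, Y i ω ^ 2 ∂μ := by
  induction s using Finset.induction_on with
  | empty => simp
  | insert l s hl ih =>
    rw [integral_sum_insert_pow hind hmeas hbdd hl (n := 2) (by norm_num), ih, sum_insert hl]
    simp [sum_range_succ, integral_finsetSum _ fun i _ => (hbdd i).integrable le_top, hmean]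

lemma integral_sum_pow_four (s : Finset ι) :
    ∫ ω, (∑ i ∈ s, Y i ω) ^ 4 ∂μ = ∑ i ∈ s, ∫ ω, Y i ω ^ 4 ∂μ +
      3 * ((∑ i ∈ s, ∫ ω, Y i ω ^ 2 ∂μ) ^ 2 - ∑ i ∈ s, (∫ ω, Y i ω ^ 2 ∂μ) ^ 2) := by
  induction s using Finset.induction_on with
  | empty => simp
  | insert l s hl ih =>
    have hS : ∫ ω, ∑ i ∈ s, Y i ω ∂μ = 0 := by
      simp [integral_finsetSum _ fun i _ => (hbdd i).integrable le_top, hmean]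
    rw [integral_sum_insert_pow hind hmeas hbdd hl (n := 4) (by norm_num), ih]
    simp only [sum_range_succ, sum_range_zero, Nat.reduceSub, pow_zero, pow_one, integral_const,
      probReal_univ, integral_sum_sq hind hmeas hbdd hmean, hS, hmean, sum_insert hl]
    norm_num [Nat.choose]
    ring

end FourthMoment

section ZeroOne

variable {Ω : Type*} [MeasurableSpace Ω] {μ : Measure Ω} {X : Ω → ℝ}

lemma memLp_top_of_forall_eq_zero_or_one (hXm : Measurable X)
    (hX : ∀ ω, X ω = 0 ∨ X ω = 1) : MemLp X ∞ μ :=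
  memLp_top_of_bound hXm.aestronglyMeasurable 1
    (ae_of_all _ fun ω => by rcases hX ω with h | h <;> simp [h])

lemma integral_sub_pow_of_forall_eq_zero_or_one [IsProbabilityMeasure μ] (hXm : Measurable X)
    (hX : ∀ ω, X ω = 0 ∨ X ω = 1) (c : ℝ) (k : ℕ) :
    ∫ ω, (X ω - c) ^ k ∂μ = ((1 - c) ^ k - (-c) ^ k) * ∫ ω, X ω ∂μ + (-c) ^ k := by
  have hpoint : ∀ ω, (X ω - c) ^ k = ((1 - c) ^ k - (-c) ^ k) * X ω + (-c) ^ k := fun ω => by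
    rcases hX ω with h | h <;> simp [h]
  have hint := (memLp_top_of_forall_eq_zero_or_one (μ := μ) hXm hX).integrable le_top
  simp_rw [hpoint]
  rw [integral_add (hint.const_mul _) (integrable_const _), integral_const_mul]
  simp

end ZeroOne

lemma eq_zero_of_four_mul_sum_pow_three_le {ι : Type*} [Fintype ι] {p : ι → ℝ} (hp : 0 ≤ p)
    (hcard : Fintype.card ι < 4) (h : 4 * ∑ i, p i ^ 3 ≤ (∑ i, p i) * ∑ i, p i ^ 2)
    (i : ι) : p i = 0 := by
  have hcheb : (∑ i, p i ^ 2) * ∑ i, p i ≤ Fintype.card ι * ∑ i, p i ^ 3 := by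
    simpa [pow_succ] using ((monovary_self p).pow_left₀ hp 2).sum_mul_sum_le_card_mul_sum
  have hcube : ∑ i, p i ^ 3 = 0 := by
    have : (Fintype.card ι : ℝ) ≤ 3 := by exact_mod_cast Nat.le_of_lt_succ hcard
    nlinarith [sum_nonneg fun i (_ : i ∈ univ) => pow_nonneg (hp i) 3]
  have := (sum_eq_zero_iff_of_nonneg fun j _ => pow_nonneg (hp j) 3).1 hcube i (mem_univ i)
  exact pow_eq_zero_iff three_ne_zero |>.1 this

lemma sum_bernoulli_fourth_moment_le {ι : Type*} (s : Finset ι) (p : ι → ℝ)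
    (h₂ : ∑ i ∈ s, p i ^ 2 ≤ ∑ i ∈ s, p i)
    (h₃ : 4 * ∑ i ∈ s, p i ^ 3 ≤ (∑ i ∈ s, p i) * ∑ i ∈ s, p i ^ 2) :
    ∑ i ∈ s, (p i - 4 * p i ^ 2 + 6 * p i ^ 3 - 3 * p i ^ 4) +
        3 * ((∑ i ∈ s, (p i - p i ^ 2)) ^ 2 - ∑ i ∈ s, (p i - p i ^ 2) ^ 2) ≤
      ∑ i ∈ s, p i + 3 * (∑ i ∈ s, p i) ^ 2 := by
  have hsq : ∀ i, (p i - p i ^ 2) ^ 2 = p i ^ 2 - 2 * p i ^ 3 + p i ^ 4 := fun i => by ring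
  simp only [hsq, sum_add_distrib, sum_sub_distrib, ← mul_sum]
  have h₂' : 0 ≤ ∑ i ∈ s, p i ^ 2 := sum_nonneg fun i _ => sq_nonneg _
  have h₄ : 0 ≤ ∑ i ∈ s, p i ^ 4 := sum_nonneg fun i _ => by positivity
  nlinarith [mul_nonneg h₂' (sub_nonneg.2 h₂)]

/-- For 4-wise independent indicator random variables with `σ₂ ≤ μ` and `12σ₃ ≤ 3μσ₂`,
the fourth central moment is bounded: `E((X-μ)⁴) ≤ μ + 3μ²`. -/
theorem stmt4 {Ω : Type*} [MeasureSpace Ω] [IsProbabilityMeasure (ℙ : Measure Ω)]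
    (n : ℕ) (X : Fin n → Ω → ℝ)
    (hmeas : ∀ i, Measurable (X i))
    (h01 : ∀ i ω, X i ω = 0 ∨ X i ω = 1)
    (hind : ∀ i j k l : Fin n, i ≠ j → i ≠ k → i ≠ l → j ≠ k → j ≠ l → k ≠ l →
      iIndepFun ![X i, X j, X k, X l] ℙ)
    (μ σ₂ σ₃ : ℝ)
    (hμ : μ = ∫ ω, (∑ i, X i ω) ∂ℙ)
    (hσ₂ : σ₂ = ∑ i, (∫ ω, X i ω ∂ℙ) ^ 2)
    (hσ₃ : σ₃ = ∑ i, (∫ ω, X i ω ∂ℙ) ^ 3)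
    (hσ₂μ : σ₂ ≤ μ)
    (hσ₃μ : 12 * σ₃ ≤ 3 * μ * σ₂) :
    (∫ ω, ((∑ i, X i ω) - μ) ^ 4 ∂ℙ) ≤ μ + 3 * μ ^ 2 := by
  set p : Fin n → ℝ := fun i => ∫ ω, X i ω ∂ℙ
  have hXint : ∀ i, Integrable (X i) := fun i =>
    (memLp_top_of_forall_eq_zero_or_one (hmeas i) (h01 i)).integrable le_top
  have hX0 : ∀ i, 0 ≤ X i := fun i ω => by rcases h01 i ω with h | h <;> simp [h]
  have hμp : μ = ∑ i, p i := by rw [hμ, integral_finsetSum _ fun i _ => hXint i]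
  have hσ₂p : σ₂ = ∑ i, p i ^ 2 := hσ₂
  have hσ₃μ' : 4 * ∑ i, p i ^ 3 ≤ (∑ i, p i) * ∑ i, p i ^ 2 := by
    rw [← hμp, ← hσ₂p, show ∑ i, p i ^ 3 = σ₃ from hσ₃.symm]; linarith
  rcases lt_or_ge n 4 with hn | hn
  · have hp : ∀ i, p i = 0 := eq_zero_of_four_mul_sum_pow_three_le
      (fun i => integral_nonneg (hX0 i)) (by simpa using hn) hσ₃μ'
    have hXae : ∀ᵐ ω, ∀ i, X i ω = 0 := ae_all_iff.2 fun i =>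
      (integral_eq_zero_iff_of_nonneg (hX0 i) (hXint i)).1 (hp i)
    have hμ0 : μ = 0 := by simp [hμp, hp]
    rw [integral_eq_zero_of_ae (by filter_upwards [hXae] with ω hω using by simp [hω, hμ0])]
    positivity
  · set Y : Fin n → Ω → ℝ := fun i ω => X i ω - p i
    have hYind : KWiseIndepFun 4 Y ℙ :=
      (kWiseIndepFun_four_of_forall_ne (by simpa using hn) hind).comp (fun i x => x - p i)
        fun i => measurable_id.sub_const _
    have hYbdd : ∀ i, MemLp (Y i) ∞ ℙ := fun i =>
      (memLp_top_of_forall_eq_zero_or_one (hmeas i) (h01 i)).sub (memLp_const _)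
    have hYmean : ∀ i, ∫ ω, Y i ω = 0 := fun i => by
      simp [Y, p, integral_sub (hXint i) (integrable_const _)]
    have hY2 : ∀ i, ∫ ω, Y i ω ^ 2 = p i - p i ^ 2 := fun i => by
      rw [integral_sub_pow_of_forall_eq_zero_or_one (hmeas i) (h01 i)]; ring
    have hY4 : ∀ i, ∫ ω, Y i ω ^ 4 = p i - 4 * p i ^ 2 + 6 * p i ^ 3 - 3 * p i ^ 4 := fun i => by
      rw [integral_sub_pow_of_forall_eq_zero_or_one (hmeas i) (h01 i)]; ring
    have hsum : ∀ ω, (∑ i, X i ω) - μ = ∑ i, Y i ω := fun ω => by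
      simp [Y, hμp, sum_sub_distrib]
    simp_rw [hsum, integral_sum_pow_four hYind (fun i => (hmeas i).sub_const _) hYbdd hYmean,
      hY2, hY4, hμp]
    exact sum_bernoulli_fourth_moment_le _ p (hμp ▸ hσ₂p ▸ hσ₂μ) hσ₃μ'
end

section
/- Suppose n keys are inserted in a linear probing hash table of size r with probe sequence start positions i_1,...,i_n, and I_1,...,I_ℓ are intervals modulo r such that the multiset {i_1,...,i_n} equals the multiset union of the I_j (each interval contributing each of its positions once). Then the total number of insertion steps is at least Σ_{1 ≤ j_1 < j_2 ≤ ℓ} |I_{j_1} ∩ I_{j_2}|^2 / 2. -/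
/-!
Say that key `x` probes key `y` when the slot of `y` is one of the slots `x` passes before
reaching its own. Slots are distinct, so `x` probes at most `off x` keys, and there are at most
`∑ off` probing pairs.

The lengths of all intervals add up to `n ≤ r`, so two of them meet in an interval `S` of
some length `m`, and every `q ∈ S` is the start of a key `x_q` counted by the first interval and of a
key `y_q` counted by the second. Among the `m²` pairs `(x_q, y_q')`, at most `m(m-1)/2` are
pairs where neither key probes the other: in such a pair the key with the earlier start in `S`
is placed in `S` before the other start, and (its slot, the other start) determines the pair.
So at least `m² / 2` probing pairs run between the keys of the two intervals, and these sets of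
pairs are disjoint for different pairs of intervals.
-/

/-- A cyclic interval modulo `r` of length `b` starting at `a`. -/
def cycInterval (r : ℕ) (a : ZMod r) (b : ℕ) : Finset (ZMod r) :=
  (Finset.range b).image (fun (t : ℕ) => a + (t : ZMod r))

open Finset Function

namespace ZMod

variable {r : ℕ} [NeZero r]

lemma val_add_eq_or_val_add_add_eq (x y : ZMod r) :
    (x + y).val = x.val + y.val ∨ (x + y).val + r = x.val + y.val := by
  rcases lt_or_ge (x.val + y.val) r with h | h
  · exact .inl (val_add_of_lt h)
  · exact .inr (val_add_val_of_le h).symm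

/-- `(y - x).val` is the distance from `x` forward to `y` around the cycle. -/
lemma val_sub_add_val_sub (x y z : ZMod r) :
    (y - x).val + (z - y).val = (z - x).val ∨ (y - x).val + (z - y).val = (z - x).val + r := by
  have := val_add_eq_or_val_add_add_eq (y - x) (z - y)
  rw [sub_add_sub_cancel'] at this
  omega

lemma eq_of_val_sub_eq {x y q : ZMod r} (h : (x - q).val = (y - q).val) : x = y :=
  sub_left_injective (val_injective r h)

lemma val_sub_lt_of_val_sub_lt_of_val_sub_lt {p p' q q' : ZMod r}
    (h : (p - q).val < (p' - q).val) (h' : (p' - q').val < (p - q').val) :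
    (p - q).val < (q' - q).val := by
  have := val_sub_add_val_sub q q' p
  have := val_sub_add_val_sub q q' p'
  have := val_lt (p - q')
  omega

lemma val_sub_lt_of_val_sub_lt_of_lt {s q q' z : ZMod r} (hq : (q - s).val < (q' - s).val)
    (hz : (z - q).val < (q' - q).val) : (z - s).val < (q' - s).val := by
  have := val_sub_add_val_sub s q z
  have := val_sub_add_val_sub s q q'
  have := val_lt (q' - q)
  have := val_lt (z - s)
  omega

end ZMod

lemma card_cycInterval {r : ℕ} (a : ZMod r) {b : ℕ} (hb : b ≤ r) :
    #(cycInterval r a b) = b := by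
  rw [cycInterval, card_image_of_injOn, card_range]
  intro s hs t ht hst
  simp only [coe_range, Set.mem_Iio] at hs ht
  simpa [ZMod.val_cast_of_lt (hs.trans_le hb), ZMod.val_cast_of_lt (ht.trans_le hb)]
    using congrArg ZMod.val (add_left_cancel hst)

section CycInterval

variable {r : ℕ} [NeZero r]

lemma mem_cycInterval_iff {a q : ZMod r} {b : ℕ} (hb : b ≤ r) :
    q ∈ cycInterval r a b ↔ (q - a).val < b := by
  simp only [cycInterval, mem_image, mem_range]
  constructor
  · rintro ⟨t, ht, rfl⟩
    rwa [add_sub_cancel_left, ZMod.val_cast_of_lt (by omega)]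
  · exact fun h => ⟨_, h, by rw [ZMod.natCast_zmod_val, add_sub_cancel]⟩

lemma cycInterval_inter_eq_of_val_sub_lt {a₁ a₂ : ZMod r} {b₁ b₂ : ℕ} (h : b₁ + b₂ ≤ r)
    (hδ : (a₂ - a₁).val < b₁) :
    cycInterval r a₁ b₁ ∩ cycInterval r a₂ b₂ =
      cycInterval r a₂ (min b₂ (b₁ - (a₂ - a₁).val)) := by
  ext q
  rw [mem_inter, mem_cycInterval_iff (by omega), mem_cycInterval_iff (by omega),
    mem_cycInterval_iff (by omega)]
  have := ZMod.val_sub_add_val_sub a₁ a₂ q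
  have := ZMod.val_lt (q - a₁)
  omega

lemma cycInterval_inter_eq_empty {a₁ a₂ : ZMod r} {b₁ b₂ : ℕ} (h : b₁ + b₂ ≤ r)
    (h₁ : b₁ ≤ (a₂ - a₁).val) (h₂ : b₂ ≤ (a₁ - a₂).val) :
    cycInterval r a₁ b₁ ∩ cycInterval r a₂ b₂ = ∅ := by
  ext q
  rw [mem_inter, mem_cycInterval_iff (by omega), mem_cycInterval_iff (by omega)]
  have := ZMod.val_sub_add_val_sub a₁ a₂ q
  have := ZMod.val_sub_add_val_sub a₂ a₁ q
  have := ZMod.val_lt (a₂ - a₁)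
  have := ZMod.val_lt (a₁ - a₂)
  simp only [notMem_empty, iff_false]
  omega

lemma exists_cycInterval_eq_inter {a₁ a₂ : ZMod r} {b₁ b₂ : ℕ} (h : b₁ + b₂ ≤ r) :
    ∃ s, ∃ m ≤ r, cycInterval r a₁ b₁ ∩ cycInterval r a₂ b₂ = cycInterval r s m := by
  by_cases h₁ : (a₂ - a₁).val < b₁
  · exact ⟨_, _, by omega, cycInterval_inter_eq_of_val_sub_lt h h₁⟩
  by_cases h₂ : (a₁ - a₂).val < b₂
  · refine ⟨a₁, min b₁ (b₂ - (a₁ - a₂).val), by omega, ?_⟩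
    rw [inter_comm, cycInterval_inter_eq_of_val_sub_lt (by omega) h₂]
  · exact ⟨a₁, 0, by omega, by
      rw [cycInterval_inter_eq_empty h (by omega) (by omega), cycInterval, range_zero,
        image_empty]⟩

end CycInterval

section Probing

variable {r : ℕ} {κ : Type*}

/-- The slot `start y + off y` of key `y` is one of the slots key `x` passes on its probe
sequence before reaching its own slot `start x + off x`. -/
def Probes (start : κ → ZMod r) (off : κ → ℕ) (x y : κ) : Prop :=
  (start y + off y - start x).val < off x

instance (start : κ → ZMod r) (off : κ → ℕ) : DecidableRel (Probes start off) :=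
  fun _ _ => Nat.decLt _ _

variable [NeZero r] {start : κ → ZMod r} {off : κ → ℕ}

lemma val_sub_start_lt_of_not_probes (hinj : Injective fun x => start x + off x) {x y : κ}
    (hxy : x ≠ y) (h : ¬ Probes start off x y) :
    (start x + off x - start x).val < (start y + off y - start x).val := by
  have hle : (start x + off x - start x).val ≤ off x := by
    rw [add_sub_cancel_left, ZMod.val_natCast]
    exact Nat.mod_le _ _
  have hne : (start x + off x - start x).val ≠ (start y + off y - start x).val :=
    fun h => hxy (hinj (ZMod.eq_of_val_sub_eq h))
  unfold Probes at h
  omega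

lemma val_sub_start_lt_of_not_probes_of_not_probes (hinj : Injective fun x => start x + off x)
    {x y : κ} (hxy : x ≠ y) (h : ¬ Probes start off x y) (h' : ¬ Probes start off y x) :
    (start x + off x - start x).val < (start y - start x).val :=
  ZMod.val_sub_lt_of_val_sub_lt_of_val_sub_lt (val_sub_start_lt_of_not_probes hinj hxy h)
    (val_sub_start_lt_of_not_probes hinj hxy.symm h')

/-- Of a pair where neither key probes the other, the key with the earlier start is placed
before the later start; its slot and that start, both in the interval, determine the pair. -/
lemma card_not_probes_le {X Y : Finset κ} (hXY : Disjoint X Y) {s : ZMod r} {m : ℕ}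
    (hinj : Injective fun x => start x + off x)
    (hXm : Set.MapsTo start X (cycInterval r s m))
    (hYm : Set.MapsTo start Y (cycInterval r s m))
    (hX : Set.InjOn start X) (hY : Set.InjOn start Y) (hm : m ≤ r) :
    #{p ∈ X ×ˢ Y | ¬ (Probes start off p.1 p.2 ∨ Probes start off p.2 p.1)} ≤ m.choose 2 := by
  have hmem : ∀ {p : κ × κ},
      p ∈ {p ∈ X ×ˢ Y | ¬ (Probes start off p.1 p.2 ∨ Probes start off p.2 p.1)} →
        p.1 ∈ X ∧ p.2 ∈ Y :=
    fun hp => mem_product.mp (mem_filter.mp hp).1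
  rw [← card_range m, ← card_product_filter_lt]
  refine card_le_card_of_injOn (fun p => if (start p.1 - s).val < (start p.2 - s).val
    then ((start p.1 + off p.1 - s).val, (start p.2 - s).val)
    else ((start p.2 + off p.2 - s).val, (start p.1 - s).val)) ?_ ?_
  · rintro ⟨x, y⟩ hp
    obtain ⟨hx, hy⟩ : x ∈ X ∧ y ∈ Y := hmem hp
    obtain ⟨hxy, hyx⟩ := not_or.mp (mem_filter.mp hp).2
    have hne : x ≠ y := fun h => disjoint_left.mp hXY hx (h ▸ hy)
    have hx' := val_sub_start_lt_of_not_probes_of_not_probes hinj hne hxy hyx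
    have hy' := val_sub_start_lt_of_not_probes_of_not_probes hinj hne.symm hyx hxy
    have hxm := (mem_cycInterval_iff hm).mp (hXm hx)
    have hym := (mem_cycInterval_iff hm).mp (hYm hy)
    simp only [coe_filter, mem_product, mem_range, Set.mem_ofPred_eq]
    split_ifs with hlt
    · have := ZMod.val_sub_lt_of_val_sub_lt_of_lt hlt hx'
      omega
    · have hne' : (start x - s).val ≠ (start y - s).val := fun h => by
        rw [ZMod.eq_of_val_sub_eq h, sub_self, ZMod.val_zero] at hy'
        exact Nat.not_lt_zero _ hy'
      have := ZMod.val_sub_lt_of_val_sub_lt_of_lt (s := s) (by omega) hy'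
      omega
  · rintro ⟨x, y⟩ hp ⟨x', y'⟩ hp' h
    obtain ⟨hx, hy⟩ : x ∈ X ∧ y ∈ Y := hmem hp
    obtain ⟨hx', hy'⟩ : x' ∈ X ∧ y' ∈ Y := hmem hp'
    dsimp only at h
    split_ifs at h <;> simp only [Prod.mk.injEq] at h
    · rw [hinj (ZMod.eq_of_val_sub_eq h.1), hY hy hy' (ZMod.eq_of_val_sub_eq h.2)]
    · exact absurd (hinj (ZMod.eq_of_val_sub_eq h.1) ▸ hy') (disjoint_left.mp hXY hx)
    · exact absurd (hinj (ZMod.eq_of_val_sub_eq h.1) ▸ hx') (disjoint_left.mp hXY.symm hy)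
    · rw [hinj (ZMod.eq_of_val_sub_eq h.1), hX hx hx' (ZMod.eq_of_val_sub_eq h.2)]

lemma sq_le_two_mul_card_probes {X Y : Finset κ} (hXY : Disjoint X Y) {s : ZMod r} {m : ℕ}
    (hinj : Injective fun x => start x + off x)
    (hX : Set.BijOn start X (cycInterval r s m)) (hY : Set.BijOn start Y (cycInterval r s m))
    (hm : m ≤ r) :
    m ^ 2 ≤ 2 * (#{p ∈ X ×ˢ Y | Probes start off p.1 p.2} +
      #{p ∈ X ×ˢ Y | Probes start off p.2 p.1}) := by
  have hcard : #(X ×ˢ Y) = m * m := by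
    rw [card_product, hX.finsetCard_eq, hY.finsetCard_eq, card_cycInterval s hm]
  have hsplit := card_filter_add_card_filter_not (s := X ×ˢ Y)
    (fun p => Probes start off p.1 p.2 ∨ Probes start off p.2 p.1)
  have hprobes : #{p ∈ X ×ˢ Y | Probes start off p.1 p.2 ∨ Probes start off p.2 p.1} ≤
      #{p ∈ X ×ˢ Y | Probes start off p.1 p.2} + #{p ∈ X ×ˢ Y | Probes start off p.2 p.1} := by
    classical
    rw [filter_or]
    exact card_union_le _ _
  have hnot := card_not_probes_le hXY hinj hX.mapsTo hY.mapsTo hX.injOn hY.injOn hm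
  have hchoose : 2 * m.choose 2 ≤ m * m := by
    have := Nat.mul_div_le (m * (m - 1)) 2
    have := Nat.mul_le_mul_left m (Nat.sub_le m 1)
    rw [Nat.choose_two_right]
    omega
  rw [sq]
  omega

variable [Fintype κ]

lemma card_probes_le (hinj : Injective fun x => start x + off x) (x : κ) :
    #{y | Probes start off x y} ≤ off x :=
  calc #{y | Probes start off x y} ≤ #(range (off x)) :=
        card_le_card_of_injOn (fun y => (start y + off y - start x).val)
          (fun _ hy => mem_range.mpr (mem_filter.mp hy).2)
          (fun _ _ _ _ h => hinj (ZMod.eq_of_val_sub_eq h))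
    _ = off x := card_range _

lemma card_probes_pairs_le (hinj : Injective fun x => start x + off x) :
    #{p : κ × κ | Probes start off p.1 p.2} ≤ ∑ x, off x := by
  calc #{p : κ × κ | Probes start off p.1 p.2} = ∑ x, #{y | Probes start off x y} := by
        simp only [card_filter, Fintype.sum_prod_type]
    _ ≤ ∑ x, off x := sum_le_sum fun x _ => card_probes_le hinj x

end Probing

lemma sum_sum_lt_add_le_sum_sum {ι : Type*} [Fintype ι] [LinearOrder ι] (N : ι → ι → ℕ) :
    ∑ α, ∑ β ∈ {β | α < β}, (N α β + N β α) ≤ ∑ α, ∑ β, N α β := by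
  have hswap : ∑ α, ∑ β ∈ {β | α < β}, N β α = ∑ α, ∑ β ∈ {β | β < α}, N α β :=
    sum_comm' (by simp)
  simp_rw [sum_add_distrib]
  rw [hswap, ← sum_add_distrib]
  gcongr with α
  rw [← sum_union (disjoint_filter.mpr fun β _ h h' => lt_asymm h h')]
  exact sum_le_sum_of_subset (subset_univ _)

section Families

variable {r : ℕ} {κ ι : Type*} [Fintype κ] {start : κ → ZMod r} {off : κ → ℕ}

lemma sum_card_probes_fiberwise [DecidableEq ι] [Fintype ι] (fam : κ → ι) :
    ∑ α, ∑ β, #{p : κ × κ | Probes start off p.1 p.2 ∧ fam p.1 = α ∧ fam p.2 = β} =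
      #{p : κ × κ | Probes start off p.1 p.2} := by
  rw [card_eq_sum_card_fiberwise (f := fun p : κ × κ => (fam p.1, fam p.2)) (t := univ)
    (fun _ _ => mem_univ _), Fintype.sum_prod_type]
  simp only [filter_filter, Prod.mk.injEq]

variable [NeZero r]

lemma sq_card_inter_le_two_mul_card_probes [DecidableEq ι]
    (hinj : Injective fun x => start x + off x) (fam : κ → ι) {α β : ι} (hαβ : α ≠ β)
    {I J : Finset (ZMod r)}
    (hI : Set.BijOn start {x | fam x = α} I) (hJ : Set.BijOn start {x | fam x = β} J)
    (hIJ : ∃ s, ∃ m ≤ r, I ∩ J = cycInterval r s m) :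
    #(I ∩ J) ^ 2 ≤
      2 * (#{p : κ × κ | Probes start off p.1 p.2 ∧ fam p.1 = α ∧ fam p.2 = β} +
        #{p : κ × κ | Probes start off p.1 p.2 ∧ fam p.1 = β ∧ fam p.2 = α}) := by
  obtain ⟨s, m, hm, hS⟩ := hIJ
  set X : Finset κ := {x | fam x = α ∧ start x ∈ J}
  set Y : Finset κ := {x | fam x = β ∧ start x ∈ I}
  have hX : Set.BijOn start X ↑(I ∩ J) := by
    convert hI.inter_mapsTo (s₂ := start ⁻¹' J) (Set.mapsTo_preimage _ _)
      Set.inter_subset_right using 1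
    · ext; simp [X]
    · simp
  have hY : Set.BijOn start Y ↑(I ∩ J) := by
    convert hJ.inter_mapsTo (s₂ := start ⁻¹' I) (Set.mapsTo_preimage _ _)
      Set.inter_subset_right using 1
    · ext; simp [Y]
    · simp [Set.inter_comm]
  have hXY : Disjoint X Y := disjoint_filter.mpr fun x _ hx hy => hαβ (hx.1.symm.trans hy.1)
  rw [hS] at hX hY ⊢
  rw [card_cycInterval s hm]
  refine (sq_le_two_mul_card_probes hXY hinj hX hY hm).trans
    (Nat.mul_le_mul_left 2 (add_le_add ?_ ?_))
  · refine card_le_card fun p hp => ?_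
    simp only [X, Y, mem_filter, mem_product, mem_univ, true_and] at hp ⊢
    exact ⟨hp.2, hp.1.1.1, hp.1.2.1⟩
  · refine card_le_card_of_injOn Prod.swap (fun p hp => ?_) Prod.swap_injective.injOn
    simp only [X, Y, coe_filter, mem_product, mem_filter, mem_univ, true_and,
      Set.mem_ofPred_eq] at hp ⊢
    exact ⟨hp.2, hp.1.2.1, hp.1.1.1⟩

theorem sum_sq_card_inter_le_two_mul_sum_off [Fintype ι] [LinearOrder ι]
    (hinj : Injective fun x => start x + off x) (fam : κ → ι) (I : ι → Finset (ZMod r))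
    (hI : ∀ α, Set.BijOn start {x | fam x = α} (I α))
    (hIJ : ∀ α β, α ≠ β → ∃ s, ∃ m ≤ r, I α ∩ I β = cycInterval r s m) :
    ∑ α, ∑ β ∈ {β | α < β}, #(I α ∩ I β) ^ 2 ≤ 2 * ∑ x, off x := by
  set N : ι → ι → ℕ := fun α β =>
    #{p : κ × κ | Probes start off p.1 p.2 ∧ fam p.1 = α ∧ fam p.2 = β}
  calc ∑ α, ∑ β ∈ {β | α < β}, #(I α ∩ I β) ^ 2
      ≤ ∑ α, ∑ β ∈ {β | α < β}, 2 * (N α β + N β α) := by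
        gcongr with α _ β hβ
        have hαβ := (mem_filter.mp hβ).2.ne
        exact sq_card_inter_le_two_mul_card_probes hinj fam hαβ (hI α) (hI β) (hIJ α β hαβ)
    _ = 2 * ∑ α, ∑ β ∈ {β | α < β}, (N α β + N β α) := by simp only [mul_sum]
    _ ≤ 2 * ∑ α, ∑ β, N α β := Nat.mul_le_mul_left 2 (sum_sum_lt_add_le_sum_sum N)
    _ = 2 * #{p : κ × κ | Probes start off p.1 p.2} := by rw [sum_card_probes_fiberwise]
    _ ≤ 2 * ∑ x, off x := Nat.mul_le_mul_left 2 (card_probes_pairs_le hinj)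

end Families

theorem Multiset.exists_equiv_of_map_univ_eq {α β γ : Type*} [Fintype α] [Fintype β]
    [DecidableEq γ] {f : α → γ} {g : β → γ} (h : univ.val.map f = univ.val.map g) :
    ∃ e : α ≃ β, ∀ x, g (e x) = f x := by
  have hfib (c : γ) : Fintype.card {x // f x = c} = Fintype.card {y // g y = c} := by
    simpa [Fintype.card_subtype, Multiset.count_map, eq_comm, Finset.card, Finset.filter_val]
      using congrArg (Multiset.count c) h
  exact ⟨Equiv.ofFiberEquiv fun c => Fintype.equivOfCardEq (hfib c), Equiv.ofFiberEquiv_map _⟩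

section Sigma

variable {r : ℕ} {ι : Type*} (a : ι → ZMod r) (b : ι → ℕ)

lemma bind_map_range_eq_map_univ [Fintype ι] :
    Multiset.bind Finset.univ.val
        (fun j => Multiset.map (fun t => a j + (t : ZMod r)) (Multiset.range (b j))) =
      univ.val.map fun s : Σ j, Fin (b j) => a s.1 + ((s.2 : ℕ) : ZMod r) := by
  rw [← univ_sigma_univ]
  simp [Finset.sigma, Multiset.sigma, Multiset.map_bind, Multiset.range,
    ← List.map_coe_finRange_eq_range, List.ofFn_eq_map, Function.comp_def]

lemma bijOn_sigma_cycInterval {α : ι} (hb : b α ≤ r) :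
    Set.BijOn (fun s : Σ j, Fin (b j) => a s.1 + ((s.2 : ℕ) : ZMod r)) {s | s.1 = α}
      (cycInterval r (a α) (b α)) := by
  refine ⟨?_, ?_, ?_⟩
  · rintro ⟨j, t⟩ rfl
    exact mem_image_of_mem _ (mem_range.mpr t.2)
  · rintro ⟨j, t⟩ rfl ⟨j', t'⟩ (rfl : j' = j) h
    have := congrArg ZMod.val (add_left_cancel h)
    rw [ZMod.val_cast_of_lt (t.2.trans_le hb), ZMod.val_cast_of_lt (t'.2.trans_le hb)] at this
    rw [Fin.ext this]
  · intro q hq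
    obtain ⟨t, ht, rfl⟩ := mem_image.mp hq
    exact ⟨⟨α, t, mem_range.mp ht⟩, rfl, rfl⟩

end Sigma

theorem stmt8_general (r n ℓ : ℕ) (hr : 0 < r)
    (i : Fin n → ZMod r) (pos : Fin n → ZMod r) (off : Fin n → ℕ)
    (hposInj : Function.Injective pos)
    (hoff : ∀ j, pos j = i j + (off j : ZMod r))
    (a : Fin ℓ → ZMod r) (b : Fin ℓ → ℕ)
    (hmulti : Multiset.map i Finset.univ.val =
      Multiset.bind Finset.univ.val
        (fun j => Multiset.map (fun t => a j + (t : ZMod r)) (Multiset.range (b j)))) :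
    ∑ j₁ : Fin ℓ, ∑ j₂ ∈ Finset.univ.filter (fun j₂ => j₁ < j₂),
        ((cycInterval r (a j₁) (b j₁) ∩ cycInterval r (a j₂) (b j₂)).card : ℝ) ^ 2 / 2
      ≤ ∑ j : Fin n, ((off j : ℝ) + 1) := by
  have : NeZero r := ⟨hr.ne'⟩
  have hinj : Injective fun j => i j + (off j : ZMod r) := funext hoff ▸ hposInj
  obtain ⟨e, he⟩ :=
    Multiset.exists_equiv_of_map_univ_eq (hmulti.trans (bind_map_range_eq_map_univ a b))
  have hb : ∑ j, b j ≤ r := by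
    simpa [Fintype.card_sigma] using
      (Fintype.card_congr e).symm.trans_le (Fintype.card_le_of_injective _ hinj)
  have hI (α : Fin ℓ) : Set.BijOn i {x | (e x).1 = α} (cycInterval r (a α) (b α)) := by
    convert (bijOn_sigma_cycInterval a b ((single_le_sum (fun _ _ => Nat.zero_le _)
      (mem_univ α)).trans hb)).comp e.bijective.bijOn_preimage
    · exact (funext he).symm
    · rfl
  have hIJ (α β : Fin ℓ) (h : α ≠ β) := exists_cycInterval_eq_inter (a₁ := a α) (a₂ := a β)
    ((add_le_sum (fun _ _ => Nat.zero_le _) (mem_univ α) (mem_univ β) h).trans hb)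
  have key := sum_sq_card_inter_le_two_mul_sum_off hinj (fun x => (e x).1) _ hI hIJ
  calc ∑ α, ∑ β ∈ {β | α < β},
        (#(cycInterval r (a α) (b α) ∩ cycInterval r (a β) (b β)) : ℝ) ^ 2 / 2
      = ((∑ α, ∑ β ∈ {β | α < β},
          #(cycInterval r (a α) (b α) ∩ cycInterval r (a β) (b β)) ^ 2 : ℕ) : ℝ) / 2 := by
        push_cast [sum_div]
        rfl
    _ ≤ ((2 * ∑ j, off j : ℕ) : ℝ) / 2 :=
        div_le_div_of_nonneg_right (by exact_mod_cast key) zero_le_two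
    _ = ∑ j, (off j : ℝ) := by push_cast; ring
    _ ≤ ∑ j, ((off j : ℝ) + 1) := sum_le_sum fun _ _ => by linarith

/-- Lower bound on the cost of linear probing insertions.  A valid linear probing
placement of `n` keys with probe-sequence start positions `i j` is modelled by an
injective placement `pos`, displacements `off` with `pos j = i j + off j`, such that
every slot strictly preceding `pos j` in the probe sequence of key `j` is occupied.
If the multiset of start positions equals the multiset union of intervals
`I_j = cycInterval r (a j) (b j)`, then the total number of insertion steps,
`Σ (off j + 1)`, is at least `Σ_{j₁ < j₂} |I_{j₁} ∩ I_{j₂}|² / 2`. -/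
theorem stmt8 (r n ℓ : ℕ) (hr : 0 < r)
    (i : Fin n → ZMod r) (pos : Fin n → ZMod r) (off : Fin n → ℕ)
    (hposInj : Function.Injective pos)
    (hoff : ∀ j, pos j = i j + (off j : ZMod r))
    (hocc : ∀ j, ∀ t < off j, ∃ j', pos j' = i j + (t : ZMod r))
    (a : Fin ℓ → ZMod r) (b : Fin ℓ → ℕ)
    (hmulti : Multiset.map i Finset.univ.val =
      Multiset.bind Finset.univ.val
        (fun j => Multiset.map (fun t => a j + (t : ZMod r)) (Multiset.range (b j)))) :
    ∑ j₁ : Fin ℓ, ∑ j₂ ∈ Finset.univ.filter (fun j₂ => j₁ < j₂),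
        ((cycInterval r (a j₁) (b j₁) ∩ cycInterval r (a j₂) (b j₂)).card : ℝ) ^ 2 / 2
      ≤ ∑ j : Fin n, ((off j : ℝ) + 1) :=
  stmt8_general r n ℓ hr i pos off hposInj hoff a b hmulti
end

section
/- Let p be prime, r̂ = ⌈p/r⌉·r, and define g(y, ŷ) = ŷ if ŷ ≥ p and g(y, ŷ) = y otherwise. Consider the family H** of functions x ↦ g((ax+b) mod p, v_x) indexed by a ∈ [p], b ∈ [p], v ∈ [r̂]^p, with the uniform distribution on the index set. Then for any distinct x_1, x_2 ∈ [p] and any y_1, y_2 ∈ [r̂], Pr{h(x_1) = y_1 and h(x_2) = y_2} = 1/r̂². -/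
open Finset

lemma zmod_pair_existsUnique {p : ℕ} [Fact p.Prime] {X₁ X₂ : ZMod p} (hX : X₁ ≠ X₂)
    (Y₁ Y₂ : ZMod p) :
    ∃! ab : ZMod p × ZMod p, ab.1 * X₁ + ab.2 = Y₁ ∧ ab.1 * X₂ + ab.2 = Y₂ := by
  have hd : X₁ - X₂ ≠ 0 := sub_ne_zero.mpr hX
  have hinv : (X₁ - X₂)⁻¹ * (X₁ - X₂) = 1 := inv_mul_cancel₀ hd
  refine ⟨((Y₁ - Y₂) * (X₁ - X₂)⁻¹, Y₁ - (Y₁ - Y₂) * (X₁ - X₂)⁻¹ * X₁), ⟨by ring, ?_⟩, ?_⟩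
  · linear_combination (Y₂ - Y₁) * hinv
  · rintro ⟨a, b⟩ ⟨h1, h2⟩
    have ha : a = (Y₁ - Y₂) * (X₁ - X₂)⁻¹ := by
      have h3 : a * (X₁ - X₂) = Y₁ - Y₂ := by linear_combination h1 - h2
      field_simp
      linear_combination h3
    have hb : b = Y₁ - (Y₁ - Y₂) * (X₁ - X₂)⁻¹ * X₁ := by
      rw [← ha]; linear_combination h1
    simp [ha, hb]

/-- The Carter–Wegman style family
`h_{a,b,v}(x) = g((a·x + b) mod p, v_x)` where `g(y, ŷ) = ŷ` if `ŷ ≥ p` and `y`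
otherwise, with `a, b ∈ [p]` and `v ∈ [r̂]^p` chosen uniformly at random and
`r̂ = ⌈p/r⌉·r`, is pairwise independent with values uniform on `[r̂]`:
for distinct `x₁ x₂ ∈ [p]` and any `y₁ y₂ ∈ [r̂]`, the number of parameter triples
`(a, b, v)` with `h(x₁) = y₁` and `h(x₂) = y₂`, multiplied by `r̂²`, equals the
total number `p²·r̂^p` of triples (i.e. the probability is `1/r̂²`). -/
theorem stmt9 (p r : ℕ) (hp : p.Prime) (hr : 0 < r) (hrp : r ≤ p)
    (rhat : ℕ) (hrhat : rhat = ((p + r - 1) / r) * r)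
    (x₁ x₂ : Fin p) (hx : x₁ ≠ x₂) (y₁ y₂ : ℕ) (hy₁ : y₁ < rhat) (hy₂ : y₂ < rhat)
    (h : Fin p → Fin p → (Fin p → Fin rhat) → Fin p → ℕ)
    (hdef : ∀ a b v x, h a b v x =
      if p ≤ (v x : ℕ) then (v x : ℕ) else ((a : ℕ) * (x : ℕ) + (b : ℕ)) % p) :
    (Finset.univ.filter
        (fun t : Fin p × Fin p × (Fin p → Fin rhat) =>
          h t.1 t.2.1 t.2.2 x₁ = y₁ ∧ h t.1 t.2.1 t.2.2 x₂ = y₂)).card * rhat ^ 2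
      = p ^ 2 * rhat ^ p := by
  haveI : Fact p.Prime := ⟨hp⟩
  haveI : NeZero p := ⟨hp.pos.ne'⟩
  have hple : p ≤ rhat := by
    subst hrhat
    have h1 : p + r - 1 < (p + r - 1) / r * r + r := Nat.lt_div_mul_add hr
    omega
  haveI : NeZero rhat := ⟨by omega⟩
  -- cast helper
  have hcast : ∀ (m z : ℕ), z < p → (m % p = z ↔ (m : ZMod p) = (z : ZMod p)) := by
    intro m z hz
    rw [ZMod.natCast_eq_natCast_iff, Nat.ModEq, Nat.mod_eq_of_lt hz]
  have hXne : ((x₁ : ℕ) : ZMod p) ≠ ((x₂ : ℕ) : ZMod p) := by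
    intro hc
    apply hx
    have := (ZMod.natCast_eq_natCast_iff _ _ _).mp hc
    rw [Nat.ModEq, Nat.mod_eq_of_lt x₁.isLt, Nat.mod_eq_of_lt x₂.isLt] at this
    exact Fin.ext this
  -- round trips
  have hval : ∀ (a : Fin p), (((a : ℕ) : ZMod p)).val = (a : ℕ) := fun a =>
    ZMod.val_cast_of_lt a.isLt
  -- joint count
  have hjoint : ∀ z₁ z₂ : ℕ, z₁ < p → z₂ < p →
      (univ.filter (fun ab : Fin p × Fin p =>
        ((ab.1 : ℕ) * (x₁ : ℕ) + (ab.2 : ℕ)) % p = z₁ ∧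
        ((ab.1 : ℕ) * (x₂ : ℕ) + (ab.2 : ℕ)) % p = z₂)).card = 1 := by
    intro z₁ z₂ hz₁ hz₂
    obtain ⟨⟨α, β⟩, ⟨hs1, hs2⟩, huniq⟩ :=
      zmod_pair_existsUnique hXne (z₁ : ZMod p) (z₂ : ZMod p)
    rw [Finset.card_eq_one]
    refine ⟨(⟨α.val, α.val_lt⟩, ⟨β.val, β.val_lt⟩), ?_⟩
    ext ⟨a, b⟩
    simp only [Finset.mem_filter, Finset.mem_univ, true_and, Finset.mem_singleton,
      Prod.mk.injEq]
    rw [hcast _ _ hz₁, hcast _ _ hz₂]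
    push_cast
    constructor
    · rintro ⟨h1, h2⟩
      have heq := huniq ((a : ℕ), (b : ℕ)) ⟨h1, h2⟩
      have h1' : ((a : ℕ) : ZMod p) = α := congrArg Prod.fst heq
      have h2' : ((b : ℕ) : ZMod p) = β := congrArg Prod.snd heq
      constructor
      · apply Fin.ext; simp only [← h1', hval]
      · apply Fin.ext; simp only [← h2', hval]
    · rintro ⟨rfl, rfl⟩
      simp only [Fin.val_mk]
      rw [ZMod.natCast_val, ZMod.natCast_val, ZMod.cast_id, ZMod.cast_id]
      exact ⟨hs1, hs2⟩
  -- single count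
  have hsingle : ∀ (x : Fin p) (z : ℕ), z < p → ∀ a : Fin p,
      (univ.filter (fun b : Fin p => ((a : ℕ) * (x : ℕ) + (b : ℕ)) % p = z)).card = 1 := by
    intro x z hz a
    rw [Finset.card_eq_one]
    set β : ZMod p := (z : ZMod p) - (a : ℕ) * ((x : ℕ) : ZMod p) with hβ
    refine ⟨⟨β.val, β.val_lt⟩, ?_⟩
    ext b
    simp only [mem_filter, mem_univ, true_and, mem_singleton]
    rw [hcast _ _ hz]
    push_cast
    constructor
    · intro h1
      apply Fin.ext
      have hb : ((b : ℕ) : ZMod p) = β := by rw [hβ]; linear_combination h1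
      simp only [← hb, hval]
    · rintro rfl
      simp only [Fin.val_mk]
      rw [ZMod.natCast_val, ZMod.cast_id, hβ]
      ring
  -- condition sets on v-coordinates
  set m₁ : Fin p → Fin p → ℕ := fun a b => ((a : ℕ) * (x₁ : ℕ) + (b : ℕ)) % p with hm₁
  set m₂ : Fin p → Fin p → ℕ := fun a b => ((a : ℕ) * (x₂ : ℕ) + (b : ℕ)) % p with hm₂
  set A : Fin p → Fin p → Finset (Fin rhat) := fun a b =>
    univ.filter (fun c : Fin rhat => (if p ≤ (c : ℕ) then (c : ℕ) else m₁ a b) = y₁) with hA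
  set B : Fin p → Fin p → Finset (Fin rhat) := fun a b =>
    univ.filter (fun c : Fin rhat => (if p ≤ (c : ℕ) then (c : ℕ) else m₂ a b) = y₂) with hB
  have hcardlt : ∀ z : ℕ, ¬ p ≤ z →
      (univ.filter (fun c : Fin rhat => ¬ p ≤ (c : ℕ))).card = p := by
    intro z hz
    have : (univ.filter fun c : Fin rhat => ¬ p ≤ (c : ℕ)) =
        (univ : Finset (Fin p)).map ⟨Fin.castLE hple, Fin.castLE_injective hple⟩ := by
      ext c
      simp only [mem_filter, mem_univ, true_and, Finset.mem_map, Function.Embedding.coeFn_mk,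
        not_le]
      constructor
      · intro hc; exact ⟨⟨(c : ℕ), hc⟩, rfl⟩
      · rintro ⟨i, rfl⟩; exact i.isLt
    rw [this]; simp
  have hm₁lt : ∀ a b, m₁ a b < p := fun a b => Nat.mod_lt _ hp.pos
  have hm₂lt : ∀ a b, m₂ a b < p := fun a b => Nat.mod_lt _ hp.pos
  have hAcard : ∀ a b, (A a b).card =
      if p ≤ y₁ then 1 else (if m₁ a b = y₁ then p else 0) := by
    intro a b
    by_cases hpy : p ≤ y₁
    · rw [if_pos hpy]
      have : A a b = {(⟨y₁, hy₁⟩ : Fin rhat)} := by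
        ext c
        simp only [hA, mem_filter, mem_univ, true_and, mem_singleton]
        constructor
        · intro hc
          by_cases hc' : p ≤ (c : ℕ)
          · rw [if_pos hc'] at hc; exact Fin.ext hc
          · rw [if_neg hc'] at hc; exact absurd hc (by have := hm₁lt a b; omega)
        · rintro rfl
          simp only [Fin.val_mk]
          rw [if_pos hpy]
      rw [this, Finset.card_singleton]
    · rw [if_neg hpy]
      by_cases hm : m₁ a b = y₁
      · rw [if_pos hm]
        have : A a b = univ.filter (fun c : Fin rhat => ¬ p ≤ (c : ℕ)) := by
          ext c
          simp only [hA, mem_filter, mem_univ, true_and]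
          constructor
          · intro hc
            by_cases hc' : p ≤ (c : ℕ)
            · rw [if_pos hc'] at hc; omega
            · exact hc'
          · intro hc; rw [if_neg hc]; exact hm
        rw [this, hcardlt y₁ hpy]
      · rw [if_neg hm]
        have : A a b = ∅ := by
          ext c
          simp only [hA, mem_filter, mem_univ, true_and, Finset.notMem_empty, iff_false]
          intro hc
          by_cases hc' : p ≤ (c : ℕ)
          · rw [if_pos hc'] at hc; omega
          · rw [if_neg hc'] at hc; exact hm hc
        rw [this, Finset.card_empty]
  have hBcard : ∀ a b, (B a b).card =
      if p ≤ y₂ then 1 else (if m₂ a b = y₂ then p else 0) := by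
    intro a b
    by_cases hpy : p ≤ y₂
    · rw [if_pos hpy]
      have : B a b = {(⟨y₂, hy₂⟩ : Fin rhat)} := by
        ext c
        simp only [hB, mem_filter, mem_univ, true_and, mem_singleton]
        constructor
        · intro hc
          by_cases hc' : p ≤ (c : ℕ)
          · rw [if_pos hc'] at hc; exact Fin.ext hc
          · rw [if_neg hc'] at hc; exact absurd hc (by have := hm₂lt a b; omega)
        · rintro rfl
          simp only [Fin.val_mk]
          rw [if_pos hpy]
      rw [this, Finset.card_singleton]
    · rw [if_neg hpy]
      by_cases hm : m₂ a b = y₂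
      · rw [if_pos hm]
        have : B a b = univ.filter (fun c : Fin rhat => ¬ p ≤ (c : ℕ)) := by
          ext c
          simp only [hB, mem_filter, mem_univ, true_and]
          constructor
          · intro hc
            by_cases hc' : p ≤ (c : ℕ)
            · rw [if_pos hc'] at hc; omega
            · exact hc'
          · intro hc; rw [if_neg hc]; exact hm
        rw [this, hcardlt y₂ hpy]
      · rw [if_neg hm]
        have : B a b = ∅ := by
          ext c
          simp only [hB, mem_filter, mem_univ, true_and, Finset.notMem_empty, iff_false]
          intro hc
          by_cases hc' : p ≤ (c : ℕ)
          · rw [if_pos hc'] at hc; omega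
          · rw [if_neg hc'] at hc; exact hm hc
        rw [this, Finset.card_empty]
  -- per (a,b) v-count
  have hvcard : ∀ a b : Fin p,
      (univ.filter (fun v : Fin p → Fin rhat => h a b v x₁ = y₁ ∧ h a b v x₂ = y₂)).card
        = (A a b).card * (B a b).card * rhat ^ (p - 2) := by
    intro a b
    set T : Fin p → Finset (Fin rhat) := fun x =>
      if x = x₁ then A a b else if x = x₂ then B a b else univ with hT
    have hTx₁ : T x₁ = A a b := by simp only [hT]; rw [if_true]
    have hTx₂ : T x₂ = B a b := by
      simp only [hT]
      rw [if_neg (fun he => hx he.symm), if_true]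
    have hTo : ∀ x, x ≠ x₁ → x ≠ x₂ → T x = univ := by
      intro x h1 h2
      simp only [hT]
      rw [if_neg h1, if_neg h2]
    have hmemA : ∀ c : Fin rhat, c ∈ A a b ↔
        (if p ≤ (c : ℕ) then (c : ℕ) else m₁ a b) = y₁ := by
      intro c
      simp only [hA, mem_filter, mem_univ, true_and]
    have hmemB : ∀ c : Fin rhat, c ∈ B a b ↔
        (if p ≤ (c : ℕ) then (c : ℕ) else m₂ a b) = y₂ := by
      intro c
      simp only [hB, mem_filter, mem_univ, true_and]
    have hfilt : (univ.filter (fun v : Fin p → Fin rhat =>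
        h a b v x₁ = y₁ ∧ h a b v x₂ = y₂)) = Fintype.piFinset T := by
      ext v
      simp only [mem_filter, mem_univ, true_and, Fintype.mem_piFinset, hdef]
      constructor
      · rintro ⟨h1, h2⟩ x
        by_cases he1 : x = x₁
        · subst he1
          rw [hTx₁, hmemA]
          exact h1
        · by_cases he2 : x = x₂
          · subst he2
            rw [hTx₂, hmemB]
            exact h2
          · rw [hTo x he1 he2]; exact mem_univ _
      · intro hall
        have h1 := hall x₁
        have h2 := hall x₂
        rw [hTx₁, hmemA] at h1
        rw [hTx₂, hmemB] at h2
        exact ⟨h1, h2⟩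
    rw [hfilt, Fintype.card_piFinset]
    rw [← Finset.mul_prod_erase univ _ (mem_univ x₁)]
    have hx₂mem : x₂ ∈ univ.erase x₁ := mem_erase.mpr ⟨fun he => hx he.symm, mem_univ _⟩
    rw [← Finset.mul_prod_erase _ _ hx₂mem]
    have hrest : ∏ x ∈ (univ.erase x₁).erase x₂, (T x).card = rhat ^ (p - 2) := by
      have hcongr : ∀ x ∈ (univ.erase x₁).erase x₂, (T x).card = rhat := by
        intro x hxm
        obtain ⟨hne2, hxm'⟩ := mem_erase.mp hxm
        obtain ⟨hne1, _⟩ := mem_erase.mp hxm'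
        rw [hTo x hne1 hne2]
        simp
      rw [Finset.prod_congr rfl hcongr, Finset.prod_const,
        Finset.card_erase_of_mem hx₂mem, Finset.card_erase_of_mem (mem_univ _),
        Finset.card_univ, Fintype.card_fin]
      congr 1
    rw [hTx₁, hTx₂, hrest]
    ring
  -- sum decomposition
  have hN : (Finset.univ.filter
        (fun t : Fin p × Fin p × (Fin p → Fin rhat) =>
          h t.1 t.2.1 t.2.2 x₁ = y₁ ∧ h t.1 t.2.1 t.2.2 x₂ = y₂)).card
      = ∑ a : Fin p, ∑ b : Fin p,
          (univ.filter (fun v : Fin p → Fin rhat =>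
            h a b v x₁ = y₁ ∧ h a b v x₂ = y₂)).card := by
    rw [Finset.card_filter, Fintype.sum_prod_type]
    refine Finset.sum_congr rfl fun a _ => ?_
    rw [Fintype.sum_prod_type]
    refine Finset.sum_congr rfl fun b _ => ?_
    rw [Finset.card_filter]
  -- the main double sum
  have hS : ∑ a : Fin p, ∑ b : Fin p, (A a b).card * (B a b).card = p ^ 2 := by
    by_cases hpy₁ : p ≤ y₁ <;> by_cases hpy₂ : p ≤ y₂
    · have heach : ∀ a b : Fin p, (A a b).card * (B a b).card = 1 := by
        intro a b
        rw [hAcard, hBcard, if_pos hpy₁, if_pos hpy₂, one_mul]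
      calc ∑ a : Fin p, ∑ b : Fin p, (A a b).card * (B a b).card
          = ∑ _a : Fin p, ∑ _b : Fin p, 1 :=
            Finset.sum_congr rfl fun a _ => Finset.sum_congr rfl fun b _ => heach a b
        _ = p ^ 2 := by simp [sq]
    · have hy₂' : y₂ < p := by omega
      have heach : ∀ a : Fin p, ∑ b : Fin p, (A a b).card * (B a b).card = p := by
        intro a
        calc ∑ b : Fin p, (A a b).card * (B a b).card
            = ∑ b : Fin p, if ((a : ℕ) * (x₂ : ℕ) + (b : ℕ)) % p = y₂ then p else 0 := by
              refine Finset.sum_congr rfl fun b _ => ?_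
              rw [hAcard, hBcard, if_pos hpy₁, if_neg hpy₂, one_mul]
          _ = ∑ b ∈ univ.filter (fun b : Fin p =>
                ((a : ℕ) * (x₂ : ℕ) + (b : ℕ)) % p = y₂), p := (Finset.sum_filter _ _).symm
          _ = p := by rw [Finset.sum_const, hsingle x₂ y₂ hy₂' a, one_smul]
      calc ∑ a : Fin p, ∑ b : Fin p, (A a b).card * (B a b).card
          = ∑ _a : Fin p, p := Finset.sum_congr rfl fun a _ => heach a
        _ = p ^ 2 := by simp [sq]
    · have hy₁' : y₁ < p := by omega
      have heach : ∀ a : Fin p, ∑ b : Fin p, (A a b).card * (B a b).card = p := by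
        intro a
        calc ∑ b : Fin p, (A a b).card * (B a b).card
            = ∑ b : Fin p, if ((a : ℕ) * (x₁ : ℕ) + (b : ℕ)) % p = y₁ then p else 0 := by
              refine Finset.sum_congr rfl fun b _ => ?_
              rw [hAcard, hBcard, if_neg hpy₁, if_pos hpy₂, mul_one]
          _ = ∑ b ∈ univ.filter (fun b : Fin p =>
                ((a : ℕ) * (x₁ : ℕ) + (b : ℕ)) % p = y₁), p := (Finset.sum_filter _ _).symm
          _ = p := by rw [Finset.sum_const, hsingle x₁ y₁ hy₁' a, one_smul]
      calc ∑ a : Fin p, ∑ b : Fin p, (A a b).card * (B a b).card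
          = ∑ _a : Fin p, p := Finset.sum_congr rfl fun a _ => heach a
        _ = p ^ 2 := by simp [sq]
    · have hy₁' : y₁ < p := by omega
      have hy₂' : y₂ < p := by omega
      have heach : ∀ a b : Fin p, (A a b).card * (B a b).card =
          if m₁ a b = y₁ ∧ m₂ a b = y₂ then p * p else 0 := by
        intro a b
        rw [hAcard, hBcard, if_neg hpy₁, if_neg hpy₂]
        by_cases h1 : m₁ a b = y₁ <;> by_cases h2 : m₂ a b = y₂ <;> simp [h1, h2]
      calc ∑ a : Fin p, ∑ b : Fin p, (A a b).card * (B a b).card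
          = ∑ ab : Fin p × Fin p,
              if m₁ ab.1 ab.2 = y₁ ∧ m₂ ab.1 ab.2 = y₂ then p * p else 0 := by
            rw [Fintype.sum_prod_type]
            exact Finset.sum_congr rfl fun a _ => Finset.sum_congr rfl fun b _ => heach a b
        _ = ∑ _ab ∈ univ.filter (fun ab : Fin p × Fin p =>
              m₁ ab.1 ab.2 = y₁ ∧ m₂ ab.1 ab.2 = y₂), p * p :=
            (Finset.sum_filter _ _).symm
        _ = p ^ 2 := by
            rw [Finset.sum_const]
            simp only [hm₁, hm₂]
            rw [hjoint y₁ y₂ hy₁' hy₂', one_smul, sq]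
  -- put everything together
  rw [hN]
  have hsum : ∑ a : Fin p, ∑ b : Fin p,
      (univ.filter (fun v : Fin p → Fin rhat =>
        h a b v x₁ = y₁ ∧ h a b v x₂ = y₂)).card = p ^ 2 * rhat ^ (p - 2) := by
    calc ∑ a : Fin p, ∑ b : Fin p,
          (univ.filter (fun v : Fin p → Fin rhat =>
            h a b v x₁ = y₁ ∧ h a b v x₂ = y₂)).card
        = ∑ a : Fin p, ∑ b : Fin p, (A a b).card * (B a b).card * rhat ^ (p - 2) :=
          Finset.sum_congr rfl fun a _ => Finset.sum_congr rfl fun b _ => hvcard a b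
      _ = ∑ a : Fin p, (∑ b : Fin p, (A a b).card * (B a b).card) * rhat ^ (p - 2) :=
          Finset.sum_congr rfl fun a _ => (Finset.sum_mul _ _ _).symm
      _ = (∑ a : Fin p, ∑ b : Fin p, (A a b).card * (B a b).card) * rhat ^ (p - 2) :=
          (Finset.sum_mul _ _ _).symm
      _ = p ^ 2 * rhat ^ (p - 2) := by rw [hS]
  rw [hsum, mul_assoc, ← pow_add]
  congr 2
  have := hp.two_le
  omega
end
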